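/- arXiv:1603.08883 — 5 statements merged into one kernel-verified Lean document; each statement's English description precedes it below -/
import Mathlib

section
/- Let G be a finite simple forest (acyclic simple graph) on N vertices and let C ≥ 1 be an integer. Then there exists a C-dismantling set S of G with (C+1)·|S| ≤ N. -/
/-!
Call the components of `G[W \ {v}]` the branches at `v`, and let `A v` consist of `v` and its
branches with at most `C` vertices. If `G[W]` has a component with more than `C` vertices, then
`|A v| > C` for some `v`: either every branch anywhere is small and any vertex of that component
works, or some branch with more than `C` vertices, at `v` towards a neighbour `w`, is smallest,
and then `w` works, because in a forest every other branch at `w` sits strictly inside it. Put `v`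
into `S` and recurse on `W \ A v`: the small branches at `v` become components, and each vertex of
`S` is paid for by the more than `C` vertices of its `A v`.
-/

namespace SimpleGraph

open Set

variable {V : Type*} {G : SimpleGraph V} {W W' U D S : Set V} {C : ℕ} {v w x y z : V}

variable (G) in
/-- The vertices of the component of `x` in `G[W]` (empty if `x ∉ W`). -/
def componentIn (W : Set V) (x : V) : Set V :=
  {y | ∃ (hx : x ∈ W) (hy : y ∈ W), (G.induce W).Reachable ⟨x, hx⟩ ⟨y, hy⟩}

theorem mem_componentIn_self (hx : x ∈ W) : x ∈ G.componentIn W x :=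
  ⟨hx, hx, .rfl⟩

theorem mem_of_componentIn_nonempty (h : (G.componentIn W x).Nonempty) : x ∈ W :=
  h.some_mem.fst

theorem componentIn_subset : G.componentIn W x ⊆ W :=
  fun _ hy => hy.snd.fst

theorem componentIn_eq_of_mem (h : y ∈ G.componentIn W x) :
    G.componentIn W y = G.componentIn W x := by
  obtain ⟨hx, hy, hr⟩ := h
  ext z
  exact ⟨fun ⟨_, hz, hr'⟩ => ⟨hx, hz, hr.trans hr'⟩,
    fun ⟨_, hz, hr'⟩ => ⟨hy, hz, hr.symm.trans hr'⟩⟩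

theorem mem_componentIn_of_adj (h : y ∈ G.componentIn W x) (hz : z ∈ W) (hyz : G.Adj y z) :
    z ∈ G.componentIn W x :=
  let ⟨hx, hy, hr⟩ := h
  ⟨hx, hz, hr.trans (Adj.reachable (G := G.induce W) (u := ⟨y, hy⟩) (v := ⟨z, hz⟩) hyz)⟩

theorem componentIn_mono (h : W ⊆ W') (x : V) : G.componentIn W x ⊆ G.componentIn W' x :=
  fun _ ⟨hx, hy, hr⟩ => ⟨h hx, h hy, hr.map (G.induceHomOfLE h).toHom⟩

theorem componentIn_subset_of_closed (hx : x ∈ D)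
    (hD : ∀ a ∈ D, ∀ b ∈ W, G.Adj a b → b ∈ D) : G.componentIn W x ⊆ D := by
  rintro y ⟨hxW, hyW, hr⟩
  have key : ∀ b : W, Relation.ReflTransGen (G.induce W).Adj ⟨x, hxW⟩ b → ↑b ∈ D := by
    intro b hb
    induction hb with
    | refl => exact hx
    | tail _ hab ih => exact hD _ ih _ (Subtype.prop _) hab
  exact key ⟨y, hyW⟩ ((reachable_iff_reflTransGen _ _).mp hr)

theorem ncard_supp_connectedComponentMk (x : W) :
    ((G.induce W).connectedComponentMk x).supp.ncard = (G.componentIn W x).ncard := by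
  have himage : Subtype.val '' ((G.induce W).connectedComponentMk x).supp = G.componentIn W x := by
    ext y
    simp only [mem_image, ConnectedComponent.mem_supp_iff, ConnectedComponent.eq]
    constructor
    · rintro ⟨⟨y, hy⟩, hr, rfl⟩
      exact ⟨x.2, hy, hr.symm⟩
    · rintro ⟨_, hy, hr⟩
      exact ⟨⟨y, hy⟩, hr.symm, rfl⟩
  rw [← himage, ncard_image_of_injective _ Subtype.val_injective]

theorem exists_adj_mem_componentIn_sdiff_singleton (h : y ∈ G.componentIn W v) (hyv : y ≠ v) :
    ∃ w, G.Adj v w ∧ y ∈ G.componentIn (W \ {v}) w := by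
  let D := insert v {y | ∃ w, G.Adj v w ∧ y ∈ G.componentIn (W \ {v}) w}
  have hD : ∀ a ∈ D, ∀ b ∈ W, G.Adj a b → b ∈ D := by
    rintro a (rfl | ⟨w, hvw, ha⟩) b hb hab
    · exact Or.inr ⟨b, hab, mem_componentIn_self ⟨hb, hab.ne'⟩⟩
    · by_cases hbv : b = v
      · exact Or.inl hbv
      · exact Or.inr ⟨w, hvw, mem_componentIn_of_adj ha ⟨hb, hbv⟩ hab⟩
  exact (componentIn_subset_of_closed (mem_insert v _) hD h).resolve_left hyv

/-- Otherwise `vx` followed by a walk in `U` from `x` to `w` avoids the bridge `vw`. -/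
theorem IsAcyclic.eq_of_adj_of_mem_componentIn (hG : G.IsAcyclic) (hvw : G.Adj v w)
    (hv : v ∉ U) (hx : x ∈ G.componentIn U w) (hvx : G.Adj v x) : x = w := by
  obtain ⟨_, _, ⟨q⟩⟩ := hx
  have hvq : v ∉ (q.map (Embedding.induce U).toHom).support := by
    rw [Walk.support_map, List.mem_map]
    rintro ⟨u, -, rfl⟩
    exact hv u.2
  set p := (q.map (Embedding.induce U).toHom).reverse
  have hvp : v ∉ p.support := by rwa [Walk.support_reverse, List.mem_reverse]
  rcases List.mem_cons.mp (isBridge_iff_forall_walk_mem_edges.mp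
    (isAcyclic_iff_forall_adj_isBridge.mp hG hvw) (p.cons hvx)) with h | h
  · exact Sym2.congr_right.mp h.symm
  · exact absurd (p.fst_mem_support_of_mem_edges h) hvp

theorem IsAcyclic.componentIn_sdiff_singleton_subset (hG : G.IsAcyclic) (hvw : G.Adj v w)
    (hy : y ∈ G.componentIn (W \ {v}) w) (hyw : y ≠ w) :
    G.componentIn (W \ {w}) y ⊆ G.componentIn (W \ {v}) w \ {w} := by
  refine componentIn_subset_of_closed ⟨hy, hyw⟩ ?_
  rintro a ⟨ha, haw⟩ b ⟨hb, hbw⟩ hab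
  have hbv : b ≠ v := by
    rintro rfl
    exact haw (hG.eq_of_adj_of_mem_componentIn hvw (fun h => h.2 rfl) ha hab.symm)
  exact ⟨mem_componentIn_of_adj ha ⟨hb, hbv⟩ hab, hbw⟩

variable (G) in
def smallBranches (W : Set V) (C : ℕ) (v : V) : Set V :=
  {x | x ∈ W \ {v} ∧ (G.componentIn (W \ {v}) x).ncard ≤ C}

theorem mem_smallBranches_of_adj (hx : x ∈ G.smallBranches W C v) (hy : y ∈ W \ {v})
    (hxy : G.Adj x y) : y ∈ G.smallBranches W C v := by
  refine ⟨hy, ?_⟩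
  rw [componentIn_eq_of_mem (mem_componentIn_of_adj (mem_componentIn_self hx.1) hy hxy)]
  exact hx.2

theorem componentIn_subset_insert_smallBranches
    (hv : ∀ w, G.Adj v w → (G.componentIn (W \ {v}) w).ncard ≤ C) :
    G.componentIn W v ⊆ insert v (G.smallBranches W C v) := by
  intro y hy
  rcases eq_or_ne y v with rfl | hyv
  · exact mem_insert y _
  obtain ⟨w, hvw, hyw⟩ := exists_adj_mem_componentIn_sdiff_singleton hy hyv
  refine Or.inr ⟨componentIn_subset hyw, ?_⟩
  rw [componentIn_eq_of_mem hyw]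
  exact hv w hvw

/-- Every other branch at `w` lies strictly inside the branch of `w` at `v`, so if the latter is
a smallest branch with more than `C` vertices, the former has at most `C`. -/
theorem IsAcyclic.componentIn_sdiff_singleton_subset_insert [Finite V] (hG : G.IsAcyclic)
    (hvw : G.Adj v w)
    (hmin : ∀ v' w', G.Adj v' w' → C < (G.componentIn (W \ {v'}) w').ncard →
      (G.componentIn (W \ {v}) w).ncard ≤ (G.componentIn (W \ {v'}) w').ncard) :
    G.componentIn (W \ {v}) w ⊆ insert w (G.smallBranches W C w) := by
  intro y hy
  rcases eq_or_ne y w with rfl | hyw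
  · exact mem_insert y _
  refine Or.inr ⟨⟨(componentIn_subset hy).1, hyw⟩, ?_⟩
  by_contra! hbig
  obtain ⟨w', hww', hyw'⟩ := exists_adj_mem_componentIn_sdiff_singleton
    (componentIn_mono sdiff_subset _ hy) hyw
  have hw : w ∈ W \ {v} := mem_of_componentIn_nonempty ⟨y, hy⟩
  have hlt : (G.componentIn (W \ {w}) y).ncard < (G.componentIn (W \ {v}) w).ncard :=
    (ncard_le_ncard (hG.componentIn_sdiff_singleton_subset hvw hy hyw)).trans_lt
      (ncard_sdiff_singleton_lt_of_mem (mem_componentIn_self hw))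
  rw [componentIn_eq_of_mem hyw'] at hbig hlt
  exact hlt.not_ge (hmin w w' hww' hbig)

theorem IsAcyclic.exists_lt_ncard_insert_smallBranches [Finite V] (hG : G.IsAcyclic)
    (hx : C < (G.componentIn W x).ncard) :
    ∃ v ∈ W, C < (insert v (G.smallBranches W C v)).ncard := by
  by_cases hbig : ∃ v w, G.Adj v w ∧ C < (G.componentIn (W \ {v}) w).ncard
  · obtain ⟨v₀, w₀, hbig⟩ := hbig
    obtain ⟨⟨v, w⟩, ⟨hvw, hC⟩, hmin⟩ := exists_min_image
      {p : V × V | G.Adj p.1 p.2 ∧ C < (G.componentIn (W \ {p.1}) p.2).ncard}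
      (fun p => (G.componentIn (W \ {p.1}) p.2).ncard) (toFinite _) ⟨(v₀, w₀), hbig⟩
    have hw : w ∈ W \ {v} :=
      mem_of_componentIn_nonempty (nonempty_of_ncard_ne_zero (Nat.ne_zero_of_lt hC))
    refine ⟨w, hw.1, hC.trans_le (ncard_le_ncard ?_)⟩
    exact hG.componentIn_sdiff_singleton_subset_insert hvw
      fun v' w' h h' => hmin (v', w') ⟨h, h'⟩
  · push Not at hbig
    have hxW : x ∈ W :=
      mem_of_componentIn_nonempty (nonempty_of_ncard_ne_zero (Nat.ne_zero_of_lt hx))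
    exact ⟨x, hxW,
      hx.trans_le (ncard_le_ncard (componentIn_subset_insert_smallBranches (hbig x)))⟩

variable (G) in
/-- `S` is a `C`-dismantling set of `G[W]`. -/
def IsDismantling (C : ℕ) (W S : Set V) : Prop :=
  ∀ x ∈ W \ S, (G.componentIn (W \ S) x).ncard ≤ C

/-- No edge of `G[W \ {v}]` leaves a small branch at `v`. -/
theorem isDismantling_insert [Finite V] (hS : S ⊆ W \ insert v (G.smallBranches W C v))
    (hdis : G.IsDismantling C (W \ insert v (G.smallBranches W C v)) S) :
    G.IsDismantling C W (insert v S) := by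
  set A := insert v (G.smallBranches W C v)
  rintro x ⟨hxW, hxvS⟩
  rw [mem_insert_iff, not_or] at hxvS
  by_cases hx : x ∈ G.smallBranches W C v
  · refine (ncard_le_ncard (componentIn_mono ?_ x)).trans hx.2
    exact sdiff_subset_sdiff_right (singleton_subset_iff.mpr (mem_insert v S))
  have hxA : x ∈ (W \ A) \ S := ⟨⟨hxW, by simp [A, hxvS.1, hx]⟩, hxvS.2⟩
  refine (ncard_le_ncard (componentIn_subset_of_closed (mem_componentIn_self hxA) ?_)).trans
    (hdis x hxA)
  rintro a ha b ⟨hbW, hbvS⟩ hab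
  rw [mem_insert_iff, not_or] at hbvS
  obtain ⟨⟨haW, haA⟩, -⟩ := componentIn_subset ha
  have hbA : b ∉ A := by
    rintro (rfl | hb)
    · exact hbvS.1 rfl
    · exact haA (mem_insert_of_mem v
        (mem_smallBranches_of_adj hb ⟨haW, fun h => haA (h ▸ mem_insert _ _)⟩ hab.symm))
  exact mem_componentIn_of_adj ha ⟨⟨hbW, hbA⟩, hbvS.2⟩ hab

theorem IsAcyclic.exists_isDismantling [Finite V] (hG : G.IsAcyclic) (C : ℕ) (W : Set V) :
    ∃ S ⊆ W, G.IsDismantling C W S ∧ (C + 1) * S.ncard ≤ W.ncard := by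
  induction hn : W.ncard using Nat.strong_induction_on generalizing W with
  | _ n ih =>
  by_cases hsmall : ∀ x ∈ W, (G.componentIn W x).ncard ≤ C
  · exact ⟨∅, empty_subset W, fun x hx => by simpa using hsmall x hx.1, by simp⟩
  push Not at hsmall
  obtain ⟨x, -, hx⟩ := hsmall
  obtain ⟨v, hvW, hA⟩ := hG.exists_lt_ncard_insert_smallBranches hx
  set A := insert v (G.smallBranches W C v)
  have hAW : A ⊆ W := insert_subset hvW fun _ hy => hy.1.1
  have hsplit := ncard_sdiff_add_ncard_of_subset hAW
  have hlt : (W \ A).ncard < n := by omega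
  obtain ⟨S, hSA, hS, hcard⟩ := ih _ hlt (W \ A) rfl
  have hvS : v ∉ S := fun h => (hSA h).2 (mem_insert v _)
  refine ⟨insert v S, insert_subset hvW (hSA.trans sdiff_subset),
    isDismantling_insert hSA hS, ?_⟩
  rw [ncard_insert_of_notMem hvS]
  linarith

end SimpleGraph

theorem forest_dismantling_general {V : Type*} [Fintype V] (G : SimpleGraph V)
    (hG : G.IsAcyclic) (C : ℕ) :
    ∃ S : Finset V,
      (∀ c : (G.induce ((↑S : Set V)ᶜ)).ConnectedComponent, c.supp.ncard ≤ C) ∧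
      (C + 1) * S.card ≤ Fintype.card V := by
  obtain ⟨S, -, hS, hcard⟩ := hG.exists_isDismantling C Set.univ
  refine ⟨(Set.toFinite S).toFinset, ?_, ?_⟩
  · rw [Set.Finite.coe_toFinset]
    intro c
    obtain ⟨x, rfl⟩ := c.exists_rep
    rw [← SimpleGraph.connectedComponentMk, SimpleGraph.ncard_supp_connectedComponentMk]
    simpa [Set.compl_eq_univ_sdiff] using hS x ⟨Set.mem_univ _, x.2⟩
  · rwa [← Set.ncard_eq_toFinset_card, ← Nat.card_eq_fintype_card, ← Set.ncard_univ]

/-- a forest on `N` vertices admits a `C`-dismantling set `S`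
with `(C+1)·|S| ≤ N`. -/
theorem forest_dismantling {V : Type*} [Fintype V] (G : SimpleGraph V)
    (hG : G.IsAcyclic) (C : ℕ) (hC : 1 ≤ C) :
    ∃ S : Finset V,
      (∀ c : (G.induce ((↑S : Set V)ᶜ)).ConnectedComponent, c.supp.ncard ≤ C) ∧
      (C + 1) * S.card ≤ Fintype.card V :=
  forest_dismantling_general G hG C
end

section
/- Let G be a d-regular finite simple graph on N vertices (every vertex has degree d), and let S be a decycling set of G with S ≠ V. Then 2(d−1)·|S| ≥ N(d−2) + 2. In particular, for d ≥ 3 the decycling number of G is at least N·(d−2)/(2(d−1)). -/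
/-!
The forest `F = V ∖ S` is nonempty, so it has at most `|F| - 1` edges. Among the `d|F|` edge-ends
at `F`, the edges inside `F` are counted twice and the others run to `S`, which can absorb at most
`d|S|` of them. Hence `d|F| ≤ 2(|F| - 1) + d|S|`, and `N = |F| + |S|` turns this into the bound.
-/

open Finset

namespace SimpleGraph
variable {V : Type*} {G : SimpleGraph V}

theorem IsAcyclic.card_edgeFinset_add_one_le [Fintype V] [Nonempty V] [Fintype G.edgeSet]
    (hG : G.IsAcyclic) : #G.edgeFinset + 1 ≤ Fintype.card V := by
  classical
  obtain ⟨T, hGT, -, hT⟩ := connected_top.exists_isTree_le_of_le_of_isAcyclic le_top hG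
  rw [← hT.card_edgeFinset]
  gcongr

variable [DecidableRel G.Adj]

lemma degree_induce_eq_card_filter (s : Finset V) (v : (s : Set V)) :
    (G.induce (s : Set V)).degree v = #{w ∈ s | G.Adj v w} := by
  rw [← card_neighborFinset_eq_degree, ← card_map (Function.Embedding.subtype _)]
  congr 1
  ext w
  simp [and_comm]

lemma sum_card_filter_adj_eq_two_mul_card_edgeFinset_induce (s : Finset V) :
    ∑ v ∈ s, #{w ∈ s | G.Adj v w} = 2 * #(G.induce (s : Set V)).edgeFinset := by
  rw [← sum_degrees_eq_twice_card_edges, ← sum_coe_sort s]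
  exact Fintype.sum_congr _ _ fun v => (degree_induce_eq_card_filter s v).symm

variable [Fintype V] [DecidableEq V]

lemma card_filter_adj_add_card_filter_adj_compl (s : Finset V) (v : V) :
    #{w ∈ s | G.Adj v w} + #{w ∈ sᶜ | G.Adj v w} = G.degree v := by
  rw [← card_union_of_disjoint (disjoint_filter_filter disjoint_compl_right), ← filter_union,
    union_compl, ← card_neighborFinset_eq_degree, neighborFinset_eq_filter]

lemma IsRegularOfDegree.card_mul_le_two_mul_card_edgeFinset_induce_add {d : ℕ}
    (hG : G.IsRegularOfDegree d) (s : Finset V) :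
    #s * d ≤ 2 * #(G.induce (s : Set V)).edgeFinset + #sᶜ * d := by
  have hcut : ∀ w, #{v ∈ s | G.Adj v w} ≤ d := fun w => by
    rw [← hG w, ← card_neighborFinset_eq_degree]
    exact card_le_card fun v hv => by simpa [adj_comm] using (mem_filter.mp hv).2
  calc #s * d = ∑ v ∈ s, G.degree v := by simp [hG _]
    _ = ∑ v ∈ s, #{w ∈ s | G.Adj v w} + ∑ v ∈ s, #{w ∈ sᶜ | G.Adj v w} := by
      simp only [← sum_add_distrib, card_filter_adj_add_card_filter_adj_compl]
    _ = 2 * #(G.induce (s : Set V)).edgeFinset + ∑ w ∈ sᶜ, #{v ∈ s | G.Adj v w} := by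
      rw [sum_card_filter_adj_eq_two_mul_card_edgeFinset_induce]
      exact congrArg _ (sum_card_bipartiteAbove_eq_sum_card_bipartiteBelow _)
    _ ≤ 2 * #(G.induce (s : Set V)).edgeFinset + #sᶜ * d := by
      grw [sum_le_card_nsmul _ _ d fun w _ => hcut w, smul_eq_mul]

end SimpleGraph

/-- if `G` is `d`-regular on `N` vertices and `S ≠ V` is a decycling set,
then `2(d−1)·|S| ≥ N(d−2) + 2`. -/
theorem decycling_regular_lower_bound {V : Type*} [Fintype V]
    (G : SimpleGraph V) [DecidableRel G.Adj] (d : ℕ)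
    (hreg : G.IsRegularOfDegree d)
    (S : Finset V) (hS : S ≠ Finset.univ)
    (hdec : (G.induce ((↑S : Set V)ᶜ)).IsAcyclic) :
    (Fintype.card V : ℤ) * ((d : ℤ) - 2) + 2 ≤ 2 * ((d : ℤ) - 1) * (S.card : ℤ) := by
  classical
  rw [← coe_compl] at hdec
  have : Nonempty (Sᶜ : Finset V) :=
    (nonempty_iff_ne_empty.2 (mt (compl_eq_empty_iff S).1 hS)).to_subtype
  have hforest : #(G.induce (Sᶜ : Finset V)).edgeFinset + 1 ≤ #Sᶜ :=
    hdec.card_edgeFinset_add_one_le.trans_eq (Fintype.card_coe _)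
  have hcount := hreg.card_mul_le_two_mul_card_edgeFinset_induce_add Sᶜ
  rw [compl_compl] at hcount
  rw [← card_add_card_compl S, Nat.cast_add]
  zify at hforest hcount
  linear_combination hcount + 2 * hforest
end

section
/- Let G be a finite simple graph on vertex set V and let c ≥ 2 be an integer. Let G' be the graph obtained from G by attaching c−1 new pendant leaves to each vertex. If W ⊆ V is a vertex cover of G, then every connected component of G'∖(inl '' W) has at most c vertices; i.e., the copy of W inside G' is a c-dismantling set of G'. -/
/-- The graph obtained from `G` by attaching `c-1` new pendant leaves to each vertex. -/
def addLeaves {V : Type*} (G : SimpleGraph V) (c : ℕ) :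
    SimpleGraph (V ⊕ V × Fin (c - 1)) :=
  SimpleGraph.fromRel (fun x y =>
    match x, y with
    | Sum.inl u, Sum.inl v => G.Adj u v
    | Sum.inl v, Sum.inr (w, _) => v = w
    | _, _ => False)

/-!
Every vertex of `addLeaves G c` has a base vertex in `G`: itself, or the vertex its leaf hangs
on. Once a vertex cover is deleted, no two surviving vertices of `G` are adjacent, so every
surviving edge joins a leaf to its base. Hence the base is constant on each component, which
therefore lies in the star of one vertex, of size `1 + (c - 1) = c`.
-/

namespace SimpleGraph

variable {α β : Type*} {H : SimpleGraph α} {f : α → β}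

theorem Reachable.eq_of_forall_adj_eq (hf : ∀ a b, H.Adj a b → f a = f b) {a b : α}
    (h : H.Reachable a b) : f a = f b := by
  obtain ⟨p⟩ := h
  induction p with
  | nil => rfl
  | cons hadj _ ih => exact (hf _ _ hadj).trans ih

theorem ConnectedComponent.exists_supp_subset_fiber (hf : ∀ a b, H.Adj a b → f a = f b)
    (C : H.ConnectedComponent) : ∃ y, C.supp ⊆ f ⁻¹' {y} := by
  induction C using ConnectedComponent.ind with
  | h a =>
    refine ⟨f a, fun b hb => ?_⟩
    rw [ConnectedComponent.mem_supp_iff, ConnectedComponent.eq] at hb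
    exact (hb.symm.eq_of_forall_adj_eq hf).symm

end SimpleGraph

namespace addLeaves

variable {V : Type*} {G : SimpleGraph V} {c : ℕ} {u v : V} {i j : Fin (c - 1)}

@[simp]
theorem adj_inl_inl : (addLeaves G c).Adj (.inl u) (.inl v) ↔ G.Adj u v := by
  simp only [addLeaves, SimpleGraph.fromRel_adj, ne_eq, Sum.inl.injEq]
  exact ⟨fun h => h.2.elim id fun h => h.symm, fun h => ⟨h.ne, .inl h⟩⟩

@[simp]
theorem adj_inl_inr : (addLeaves G c).Adj (.inl u) (.inr (v, j)) ↔ u = v := by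
  simp [addLeaves]

@[simp]
theorem adj_inr_inl : (addLeaves G c).Adj (.inr (u, i)) (.inl v) ↔ u = v := by
  rw [SimpleGraph.adj_comm, adj_inl_inr, eq_comm]

@[simp]
theorem not_adj_inr_inr : ¬(addLeaves G c).Adj (.inr (u, i)) (.inr (v, j)) := by
  simp [addLeaves]

theorem base_eq_of_adj {W : Set V} (hW : ∀ u v : V, G.Adj u v → u ∈ W ∨ v ∈ W)
    {x y : V ⊕ V × Fin (c - 1)} (hx : x ∉ Sum.inl '' W) (hy : y ∉ Sum.inl '' W)
    (h : (addLeaves G c).Adj x y) : Sum.elim id Prod.fst x = Sum.elim id Prod.fst y := by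
  rcases x with u | ⟨u, i⟩ <;> rcases y with v | ⟨v, j⟩
  · exact ((hW u v (adj_inl_inl.1 h)).elim (fun hu => hx ⟨u, hu, rfl⟩)
      fun hv => hy ⟨v, hv, rfl⟩).elim
  · exact adj_inl_inr.1 h
  · exact adj_inr_inl.1 h
  · exact (not_adj_inr_inr h).elim

end addLeaves

theorem Sum.elim_id_fst_preimage_singleton {V ι : Type*} (v : V) :
    (Sum.elim id Prod.fst ⁻¹' {v} : Set (V ⊕ V × ι)) =
      insert (Sum.inl v) (Set.range fun i => Sum.inr (v, i)) := by
  ext (u | ⟨u, i⟩) <;> simp [eq_comm]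

theorem vertexCover_gives_dismantling_general {V : Type*}
    (G : SimpleGraph V) (c : ℕ) (hc : 2 ≤ c)
    (W : Set V) (hW : ∀ u v : V, G.Adj u v → u ∈ W ∨ v ∈ W) :
    ∀ comp : ((addLeaves G c).induce ((Sum.inl '' W)ᶜ :
        Set (V ⊕ V × Fin (c - 1)))).ConnectedComponent,
      comp.supp.ncard ≤ c := by
  intro C
  obtain ⟨v, hv⟩ := C.exists_supp_subset_fiber (f := Sum.elim id Prod.fst ∘ Subtype.val)
    fun x y h => addLeaves.base_eq_of_adj hW x.2 y.2 h
  have hleaves : (Set.range fun i : Fin (c - 1) => (Sum.inr (v, i) : V ⊕ V × Fin (c - 1))).ncard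
      = c - 1 := by
    rw [Set.ncard_range_of_injective fun i j h => by simpa using h, Nat.card_fin]
  calc C.supp.ncard = (Subtype.val '' C.supp).ncard :=
        (Set.ncard_image_of_injective _ Subtype.val_injective).symm
    _ ≤ (insert (Sum.inl v) (Set.range fun i => Sum.inr (v, i))).ncard := by
        refine Set.ncard_le_ncard ?_
        rw [← Sum.elim_id_fst_preimage_singleton]
        rintro _ ⟨x, hx, rfl⟩
        exact hv hx
    _ ≤ c - 1 + 1 := hleaves ▸ Set.ncard_insert_le _ _
    _ = c := by omega

/-- if `W` is a vertex cover of `G`, then the copy of `W` inside `G'`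
(the graph with `c-1` pendant leaves attached to each vertex) is a `c`-dismantling set
of `G'`. -/
theorem vertexCover_gives_dismantling {V : Type*} [Fintype V]
    (G : SimpleGraph V) (c : ℕ) (hc : 2 ≤ c)
    (W : Set V) (hW : ∀ u v : V, G.Adj u v → u ∈ W ∨ v ∈ W) :
    ∀ comp : ((addLeaves G c).induce ((Sum.inl '' W)ᶜ :
        Set (V ⊕ V × Fin (c - 1)))).ConnectedComponent,
      comp.supp.ncard ≤ c :=
  vertexCover_gives_dismantling_general G c hc W hW
end

section
/- Let G be a finite simple graph on vertex set V and let c ≥ 2 be an integer. Let G' be the graph obtained from G by attaching c−1 new pendant leaves to each vertex, and let π : V' → V be the projection sending each vertex of V to itself and each leaf attached to v to v. If S ⊆ V' is a set such that every connected component of G'∖S has fewer than 2c vertices, then W = π(S) is a vertex cover of G with |W| ≤ |S|. -/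
/-! If an edge `uv` of `G` had both endpoints outside `π(S)`, then the whole fibre `π⁻¹{u, v}`,
i.e. `u`, `v` and their `2(c - 1)` leaves, would avoid `S`. This fibre is connected in `G'`
(through the edge `uv` and the pendant edges), so the component of `G' ∖ S` containing it has at
least `2c` vertices. The bound `|π(S)| ≤ |S|` holds for any image of a finite set. -/

open SimpleGraph Set

theorem SimpleGraph.ncard_le_ncard_supp_of_forall_reachable {α : Type*} [Finite α]
    {H : SimpleGraph α} {s T : Set α} (x : s) (hT : T ⊆ s)
    (hreach : ∀ y (hy : y ∈ T), (H.induce s).Reachable x ⟨y, hT hy⟩) :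
    T.ncard ≤ ((H.induce s).connectedComponentMk x).supp.ncard := by
  rw [← ncard_image_of_injective _ Subtype.val_injective]
  exact ncard_le_ncard fun y hy => ⟨⟨y, hT hy⟩, ConnectedComponent.sound (hreach y hy).symm, rfl⟩

section Fibres

variable {V : Type*} {n : ℕ}

theorem ncard_preimage_sumElim_id_fst_singleton (v : V) :
    (Sum.elim id Prod.fst ⁻¹' {v} : Set (V ⊕ V × Fin n)).ncard = n + 1 := by
  have hfibre : (Sum.elim id Prod.fst ⁻¹' {v} : Set (V ⊕ V × Fin n)) =
      insert (.inl v) (range fun i => .inr (v, i)) := by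
    ext (w | ⟨w, i⟩) <;> simp [eq_comm]
  have hinj : Function.Injective fun i : Fin n => (Sum.inr (v, i) : V ⊕ V × Fin n) :=
    fun i j h => by simpa using h
  rw [hfibre, ncard_insert_of_notMem (by simp), ncard_range_of_injective hinj,
    Nat.card_eq_fintype_card, Fintype.card_fin]

theorem ncard_preimage_sumElim_id_fst_pair {u v : V} (huv : u ≠ v) :
    (Sum.elim id Prod.fst ⁻¹' {u, v} : Set (V ⊕ V × Fin n)).ncard = 2 * (n + 1) := by
  have hfinite (w : V) : (Sum.elim id Prod.fst ⁻¹' {w} : Set (V ⊕ V × Fin n)).Finite :=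
    finite_of_ncard_pos (by rw [ncard_preimage_sumElim_id_fst_singleton]; omega)
  rw [insert_eq, preimage_union,
    ncard_union_eq ((disjoint_singleton.2 huv).preimage _) (hfinite u) (hfinite v),
    ncard_preimage_sumElim_id_fst_singleton, ncard_preimage_sumElim_id_fst_singleton]
  ring

end Fibres

section AddLeaves

variable {V : Type*} {G : SimpleGraph V} {c : ℕ}

@[simp]
theorem addLeaves_adj_inl_inl {u v : V} :
    (addLeaves G c).Adj (.inl u) (.inl v) ↔ G.Adj u v := by
  simp only [addLeaves, fromRel_adj, ne_eq, Sum.inl.injEq, G.adj_comm v u, or_self]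
  exact ⟨And.right, fun h => ⟨h.ne, h⟩⟩

@[simp]
theorem addLeaves_adj_inl_inr {v w : V} {i : Fin (c - 1)} :
    (addLeaves G c).Adj (.inl v) (.inr (w, i)) ↔ v = w := by
  simp [addLeaves]

theorem addLeaves_induce_reachable_of_adj {s : Set (V ⊕ V × Fin (c - 1))} {u v : V}
    (huv : G.Adj u v) (hs : Sum.elim id Prod.fst ⁻¹' {u, v} ⊆ s)
    (x : V ⊕ V × Fin (c - 1)) (hx : x ∈ Sum.elim id Prod.fst ⁻¹' {u, v}) :
    ((addLeaves G c).induce s).Reachable ⟨.inl u, hs (by simp)⟩ ⟨x, hs hx⟩ := by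
  have huv' : ((addLeaves G c).induce s).Adj ⟨.inl u, hs (by simp)⟩ ⟨.inl v, hs (by simp)⟩ := by
    simpa using huv
  rcases x with w | ⟨w, i⟩ <;> obtain rfl | rfl : w = u ∨ w = v := by simpa using hx
  · rfl
  · exact huv'.reachable
  · exact Adj.reachable (by simp)
  · exact huv'.reachable.trans (Adj.reachable (by simp))

end AddLeaves

theorem dismantling_projects_to_vertexCover_general {V : Type*} [Fintype V]
    (G : SimpleGraph V) (c : ℕ)
    (S : Set (V ⊕ V × Fin (c - 1)))
    (hS : ∀ comp : ((addLeaves G c).induce (Sᶜ :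
        Set (V ⊕ V × Fin (c - 1)))).ConnectedComponent,
      comp.supp.ncard < 2 * c) :
    (∀ u v : V, G.Adj u v →
        u ∈ Sum.elim id Prod.fst '' S ∨ v ∈ Sum.elim id Prod.fst '' S) ∧
      (Sum.elim id Prod.fst '' S).ncard ≤ S.ncard := by
  refine ⟨fun u v huv => ?_, ncard_image_le S.toFinite⟩
  by_contra! huncovered
  have hfibre : Sum.elim id Prod.fst ⁻¹' {u, v} ⊆ Sᶜ := by
    rintro x hx hxS
    obtain rfl | rfl := hx <;> simp_all [mem_image_of_mem _ hxS]
  have hcomp := ncard_le_ncard_supp_of_forall_reachable _ hfibre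
    (addLeaves_induce_reachable_of_adj huv hfibre)
  rw [ncard_preimage_sumElim_id_fst_pair huv.ne] at hcomp
  have := hcomp.trans_lt (hS _)
  omega

/-- if every connected component of `G' ∖ S` has fewer than `2c` vertices,
then the projection `W = π(S)` is a vertex cover of `G` with `|W| ≤ |S|`. -/
theorem dismantling_projects_to_vertexCover {V : Type*} [Fintype V]
    (G : SimpleGraph V) (c : ℕ) (hc : 2 ≤ c)
    (S : Set (V ⊕ V × Fin (c - 1)))
    (hS : ∀ comp : ((addLeaves G c).induce (Sᶜ :
        Set (V ⊕ V × Fin (c - 1)))).ConnectedComponent,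
      comp.supp.ncard < 2 * c) :
    (∀ u v : V, G.Adj u v →
        u ∈ Sum.elim id Prod.fst '' S ∨ v ∈ Sum.elim id Prod.fst '' S) ∧
      (Sum.elim id Prod.fst '' S).ncard ≤ S.ncard :=
  dismantling_projects_to_vertexCover_general G c S hS
end

section
/- Let G be a finite simple graph on vertex set V with |V| = N, let S ⊆ V, and define the parallel leaf-removal dynamics x : ℕ → V → Bool by x⁰_i = true if i ∈ S and false otherwise, and x^{t+1}_i = true if x^t_i = true or if the number of neighbors j of i with x^t_j = false is at most 1, and x^{t+1}_i = false otherwise. Then S is a decycling set of G (i.e., G∖S contains no cycle) if and only if x^N_i = true for all vertices i. -/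
/-!
Track the set `U t` of vertices not yet removed at time `t`; it always avoids `S` and
shrinks. A vertex of `U t` survives one more step iff it has at least two neighbours in
`U t`. If `G ∖ S` is a forest, so is the subgraph induced on `U t`, and a nonempty finite
forest has a vertex of degree at most one (an end of a longest path), so `U t` loses a
vertex at every step until it is empty, which happens by time `|V|`. Conversely, every
vertex of a cycle in `G ∖ S` has two neighbours on the cycle, so the cycle is never removed.
-/

/-- Parallel leaf-removal dynamics started from the indicator of `S`: initially exactly
the vertices of `S` are removed (`true`), and at each step an unremoved vertex becomes
removed if at most one of its neighbors is unremoved. -/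
def leafRemoval {V : Type*} [Fintype V] [DecidableEq V] (G : SimpleGraph V)
    [DecidableRel G.Adj] (S : Set V) [DecidablePred (· ∈ S)] : ℕ → V → Bool
  | 0, i => decide (i ∈ S)
  | t + 1, i =>
    leafRemoval G S t i ||
      decide (((G.neighborFinset i).filter
        (fun j => leafRemoval G S t j = false)).card ≤ 1)

open Finset

namespace SimpleGraph

variable {V : Type*} {G : SimpleGraph V}

lemma IsAcyclic.exists_degree_le_one [Fintype V] [Nonempty V] [DecidableRel G.Adj]
    (hG : G.IsAcyclic) : ∃ v, G.degree v ≤ 1 := by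
  obtain ⟨u, v, p, hp, hmax⟩ := Walk.exists_isPath_forall_isPath_length_le_length G
  refine ⟨u, ?_⟩
  have hsub : G.neighborFinset u ⊆ {p.snd} := by
    intro w hw
    rw [mem_neighborFinset] at hw
    have hwp : w ∈ p.support := by
      by_contra hwp
      have := hmax _ _ _ (hp.cons hwp (h := hw.symm))
      simp at this
    exact mem_singleton.mpr (hG.eq_snd_of_adj_start hp hw hwp)
  simpa using card_le_card hsub

lemma Walk.IsCycle.one_lt_card_neighborFinset_inter_support [Fintype V] [DecidableEq V]
    [DecidableRel G.Adj] {u v : V} {c : G.Walk u u} (hc : c.IsCycle) (hv : v ∈ c.support) :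
    1 < #(G.neighborFinset v ∩ c.support.toFinset) := by
  have hsub : c.toSubgraph.neighborSet v ⊆ ↑(G.neighborFinset v ∩ c.support.toFinset) := by
    intro w hw
    exact mem_coe.mpr <| mem_inter.mpr ⟨(mem_neighborFinset ..).mpr hw.adj_sub,
      List.mem_toFinset.mpr ((c.mem_verts_toSubgraph).mp hw.snd_mem)⟩
  have := Set.ncard_le_ncard hsub (Finset.finite_toSet _)
  rw [hc.ncard_neighborSet_toSubgraph_eq_two hv, Set.ncard_coe_finset] at this
  omega

end SimpleGraph

open SimpleGraph

section leafRemoval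

variable {V : Type*} [Fintype V] [DecidableEq V] {G : SimpleGraph V} [DecidableRel G.Adj]
  {S : Set V} [DecidablePred (· ∈ S)] {t : ℕ} {i : V}

variable (G S) in
def unremoved (t : ℕ) : Finset V := {i | leafRemoval G S t i = false}

lemma mem_unremoved : i ∈ unremoved G S t ↔ leafRemoval G S t i = false := by
  simp [unremoved]

lemma mem_unremoved_zero : i ∈ unremoved G S 0 ↔ i ∉ S := by
  simp [mem_unremoved, leafRemoval]

lemma mem_unremoved_succ :
    i ∈ unremoved G S (t + 1) ↔
      i ∈ unremoved G S t ∧ 1 < #(G.neighborFinset i ∩ unremoved G S t) := by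
  have hfilter : (G.neighborFinset i).filter (fun j => leafRemoval G S t j = false) =
      G.neighborFinset i ∩ unremoved G S t := by
    ext j; simp [mem_unremoved]
  simp only [mem_unremoved, leafRemoval, Bool.or_eq_false_iff, decide_eq_false_iff_not,
    hfilter, not_le]

lemma unremoved_succ_subset : unremoved G S (t + 1) ⊆ unremoved G S t :=
  fun _ hi => (mem_unremoved_succ.mp hi).1

lemma unremoved_subset_compl : ∀ t, ↑(unremoved G S t) ⊆ Sᶜ
  | 0 => fun _ hi => mem_unremoved_zero.mp hi
  | t + 1 => (coe_subset.mpr unremoved_succ_subset).trans (unremoved_subset_compl t)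

lemma unremoved_succ_ssubset (hS : (G.induce Sᶜ).IsAcyclic)
    (hne : (unremoved G S t).Nonempty) : unremoved G S (t + 1) ⊂ unremoved G S t := by
  set U := unremoved G S t
  have : Nonempty (U : Set V) := hne.to_subtype
  have hU : (G.induce (U : Set V)).IsAcyclic :=
    hS.embedding (G.induceHomOfLE (unremoved_subset_compl t))
  obtain ⟨⟨v, hv⟩, hdeg⟩ := hU.exists_degree_le_one
  have hcard : #(G.neighborFinset v ∩ U) = (G.induce (U : Set V)).degree ⟨v, hv⟩ := by
    rw [← card_neighborFinset_eq_degree, ← card_map (.subtype (· ∈ (U : Set V)))]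
    congr 1
    ext w
    simp
  refine Finset.ssubset_iff_subset_ne.mpr ⟨unremoved_succ_subset, fun heq => ?_⟩
  have hsurvives : 1 < #(G.neighborFinset v ∩ U) :=
    (mem_unremoved_succ.mp (heq ▸ hv : v ∈ unremoved G S (t + 1))).2
  omega

lemma card_unremoved_le (hS : (G.induce Sᶜ).IsAcyclic) :
    ∀ t, #(unremoved G S t) ≤ Fintype.card V - t
  | 0 => card_le_univ _
  | t + 1 => by
    have ih := card_unremoved_le hS t
    rcases (unremoved G S t).eq_empty_or_nonempty with hempty | hne
    · have : unremoved G S (t + 1) ⊆ ∅ := hempty ▸ unremoved_succ_subset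
      simp [subset_empty.mp this]
    · have := card_lt_card (unremoved_succ_ssubset hS hne)
      omega

lemma subset_unremoved {C : Finset V} (hCS : ↑C ⊆ Sᶜ)
    (hC : ∀ v ∈ C, 1 < #(G.neighborFinset v ∩ C)) : ∀ t, C ⊆ unremoved G S t
  | 0 => fun _ hv => mem_unremoved_zero.mpr (hCS hv)
  | t + 1 => fun v hv => mem_unremoved_succ.mpr
    ⟨subset_unremoved hCS hC t hv,
      (hC v hv).trans_le (card_le_card (inter_subset_inter_left (subset_unremoved hCS hC t)))⟩

end leafRemoval

/-- `S` is a decycling set of `G` iff the parallel leaf-removal dynamics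
started from `S` removes every vertex within `N = |V|` steps. -/
theorem decycling_iff_leafRemoval_all {V : Type*} [Fintype V] [DecidableEq V]
    (G : SimpleGraph V) [DecidableRel G.Adj] (S : Set V) [DecidablePred (· ∈ S)] :
    (G.induce (Sᶜ : Set V)).IsAcyclic ↔
      ∀ i : V, leafRemoval G S (Fintype.card V) i = true := by
  constructor
  · intro hS i
    have hempty : unremoved G S (Fintype.card V) = ∅ := by
      simpa using card_unremoved_le hS (Fintype.card V)
    have hi : i ∉ unremoved G S (Fintype.card V) := by simp [hempty]
    simpa [mem_unremoved] using hi
  · intro hall u c hc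
    set c' := c.map (Embedding.induce (G := G) Sᶜ).toHom
    have hc' : c'.IsCycle := hc.map (Embedding.induce (G := G) Sᶜ).injective
    have hCS : ↑c'.support.toFinset ⊆ Sᶜ := by
      intro x hx
      rw [mem_coe, List.mem_toFinset, Walk.support_map, List.mem_map] at hx
      obtain ⟨y, -, rfl⟩ := hx
      exact y.2
    have hu := subset_unremoved hCS
      (fun v hv => hc'.one_lt_card_neighborFinset_inter_support (List.mem_toFinset.mp hv))
      (Fintype.card V) (List.mem_toFinset.mpr c'.start_mem_support)
    simp [mem_unremoved, hall] at hu
end
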